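/- The coordinate of the (1,λ)-winner has variance at least 1/(32λ²): if x₁,…,x_λ are i.i.d. standard n-dimensional Gaussians, J : ℝⁿ → ℝ is any measurable function, and y is the sample minimizing J (ties broken measurably), then for each coordinate i, Var(y_i) ≥ 1/(32λ²). -/

import Mathlib

open MeasureTheory ProbabilityTheory
open scoped NNReal ENNReal

lemma gaussianPDFReal_le_half (x : ℝ) : gaussianPDFReal 0 1 x ≤ 1 / 2 := by
  rw [gaussianPDFReal]
  have h1 : Real.exp (-(x - 0) ^ 2 / (2 * ((1 : ℝ≥0) : ℝ))) ≤ 1 := by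
    rw [Real.exp_le_one_iff]
    have : (0:ℝ) ≤ (x - 0) ^ 2 := sq_nonneg _
    simp only [NNReal.coe_one, mul_one]
    nlinarith
  have h2 : (Real.sqrt (2 * Real.pi * ((1 : ℝ≥0) : ℝ)))⁻¹ ≤ 1 / 2 := by
    rw [inv_le_comm₀ (by positivity) (by norm_num)]
    have : Real.sqrt 4 ≤ Real.sqrt (2 * Real.pi * ((1 : ℝ≥0) : ℝ)) := by
      apply Real.sqrt_le_sqrt
      simp only [NNReal.coe_one, mul_one]
      nlinarith [Real.pi_gt_three]
    have h4 : Real.sqrt 4 = 2 := by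
      rw [show (4:ℝ) = 2 ^ 2 by norm_num, Real.sqrt_sq (by norm_num)]
    rw [one_div]
    rw [h4] at this
    linarith [this, (by norm_num : (2:ℝ)⁻¹ ≤ 2)]
  calc (Real.sqrt (2 * Real.pi * ((1 : ℝ≥0) : ℝ)))⁻¹ * Real.exp (-(x - 0) ^ 2 / (2 * ((1 : ℝ≥0) : ℝ)))
      ≤ (Real.sqrt (2 * Real.pi * ((1 : ℝ≥0) : ℝ)))⁻¹ * 1 :=
        mul_le_mul_of_nonneg_left h1 (by positivity)
    _ = (Real.sqrt (2 * Real.pi * ((1 : ℝ≥0) : ℝ)))⁻¹ := mul_one _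
    _ ≤ 1 / 2 := h2

lemma gaussian_Ioo_le (a δ : ℝ) (hδ : 0 ≤ δ) :
    gaussianReal 0 1 (Set.Ioo (a - δ) (a + δ)) ≤ ENNReal.ofReal δ := by
  rw [gaussianReal_apply_eq_integral 0 one_ne_zero]
  apply ENNReal.ofReal_le_ofReal
  calc ∫ x in Set.Ioo (a - δ) (a + δ), gaussianPDFReal 0 1 x
      ≤ ∫ _x in Set.Ioo (a - δ) (a + δ), (1/2 : ℝ) := by
        apply setIntegral_mono_on
        · exact (integrable_gaussianPDFReal 0 1).restrict
        · exact integrableOn_const measure_Ioo_lt_top.ne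
        · exact measurableSet_Ioo
        · exact fun x _ => gaussianPDFReal_le_half x
    _ = (volume (Set.Ioo (a - δ) (a + δ))).toReal * (1/2) := by
        rw [setIntegral_const, smul_eq_mul]
        rfl
    _ ≤ δ := by
        rw [Real.volume_Ioo, show a + δ - (a - δ) = 2 * δ by ring,
          ENNReal.toReal_ofReal (by linarith)]
        linarith

/-- The coordinate of the (1,λ)-winner has variance at least `1/(32 λ²)`: if `x₁,…,x_λ` are
i.i.d. standard `n`-dimensional Gaussians, `J` is any measurable function, and `y` is the
sample minimizing `J`, then each coordinate of `y` has variance at least `1/(32 λ²)`. -/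
theorem winner_coordinate_variance_lower_bound
    {Ω : Type*} [MeasurableSpace Ω] (P : Measure Ω) [IsProbabilityMeasure P]
    (n lam : ℕ) (hlam : 0 < lam)
    (x : Fin lam → Ω → (Fin n → ℝ)) (hmeas : ∀ k, Measurable (x k))
    (hindep : iIndepFun x P)
    (hgauss : ∀ k, Measure.map (x k) P = Measure.pi fun _ : Fin n => gaussianReal 0 1)
    (J : (Fin n → ℝ) → ℝ) (hJ : Measurable J)
    (y : Ω → (Fin n → ℝ)) (hymeas : Measurable y)
    (hwin : ∀ ω, (∃ k, y ω = x k ω) ∧ ∀ m, J (y ω) ≤ J (x m ω))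
    (i : Fin n) (hyL2 : MemLp (fun ω => y ω i) 2 P) :
    1 / (32 * (lam : ℝ) ^ 2) ≤ variance (fun ω => y ω i) P := by
  classical
  set f : Ω → ℝ := fun ω => y ω i with hf
  set m : ℝ := ∫ ω, f ω ∂P with hm
  set δ : ℝ := 1 / (4 * lam) with hδdef
  have hlamR : (0:ℝ) < lam := by exact_mod_cast hlam
  have hδpos : 0 < δ := by positivity
  have hfmeas : Measurable f := (measurable_pi_apply i).comp hymeas
  have hfi : ∀ k, Measurable (fun ω => x k ω i) :=
    fun k => (measurable_pi_apply i).comp (hmeas k)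
  -- marginal of coordinate i is standard gaussian
  have hmarg : ∀ k, Measure.map (fun ω => x k ω i) P = gaussianReal 0 1 := by
    intro k
    have hcomp : (fun ω => x k ω i) = (Function.eval i) ∘ (x k) := rfl
    rw [hcomp, ← Measure.map_map (measurable_pi_apply i) (hmeas k), hgauss k]
    ext s hs
    rw [Measure.map_apply (measurable_pi_apply i) hs, Set.eval_preimage,
      Measure.pi_pi]
    rw [Finset.prod_eq_single i
      (fun j _ hj => by rw [Function.update_of_ne hj]; simp)
      (fun h => absurd (Finset.mem_univ i) h)]
    rw [Function.update_self]
  -- pointwise event bound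
  have hbound : ∀ k, P {ω | |x k ω i - m| < δ} ≤ ENNReal.ofReal δ := by
    intro k
    have hset : {ω | |x k ω i - m| < δ}
        = (fun ω => x k ω i) ⁻¹' Set.Ioo (m - δ) (m + δ) := by
      ext ω
      simp only [Set.mem_setOf_eq, Set.mem_preimage, Set.mem_Ioo, abs_lt]
      constructor <;> intro h <;> constructor <;> linarith [h.1, h.2]
    rw [hset, ← Measure.map_apply (hfi k) measurableSet_Ioo, hmarg k]
    exact gaussian_Ioo_le m δ hδpos.le
  -- union bound
  have hsub : {ω | |f ω - m| < δ} ⊆ ⋃ k, {ω | |x k ω i - m| < δ} := by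
    intro ω hω
    obtain ⟨k, hk⟩ := (hwin ω).1
    refine Set.mem_iUnion.2 ⟨k, ?_⟩
    simp only [Set.mem_setOf_eq] at hω ⊢
    have : x k ω i = f ω := by rw [hf]; simp [hk]
    rw [this]; exact hω
  have hP1 : P {ω | |f ω - m| < δ} ≤ 2⁻¹ := by
    calc P {ω | |f ω - m| < δ}
        ≤ ∑' k : Fin lam, P {ω | |x k ω i - m| < δ} :=
          (measure_mono hsub).trans (measure_iUnion_le _)
      _ ≤ ∑' (_ : Fin lam), ENNReal.ofReal δ := ENNReal.tsum_le_tsum fun k => hbound k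
      _ = (lam : ℝ≥0∞) * ENNReal.ofReal δ := by
          simp [tsum_fintype, Finset.sum_const, mul_comm]
      _ = ENNReal.ofReal ((lam : ℝ) * δ) := by
          rw [ENNReal.ofReal_mul (by positivity), ENNReal.ofReal_natCast]
      _ ≤ 2⁻¹ := by
          have : (lam : ℝ) * δ = 1/4 := by
            rw [hδdef]; field_simp
          rw [this, show ((2:ℝ≥0∞))⁻¹ = ENNReal.ofReal (1/2) by
            rw [ENNReal.ofReal_div_of_pos (by norm_num)]; simp]
          exact ENNReal.ofReal_le_ofReal (by norm_num)
  -- lower bound on P of the complement event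
  have hBmeas : MeasurableSet {ω | |f ω - m| < δ} :=
    measurableSet_lt ((hfmeas.sub measurable_const).abs) measurable_const
  have hcompl : {ω | |f ω - m| < δ}ᶜ = {ω | δ ≤ |f ω - m|} := by
    ext ω; simp [not_lt]
  have hPA : 2⁻¹ ≤ P {ω | δ ≤ |f ω - m|} := by
    calc (2⁻¹ : ℝ≥0∞) = 1 - 2⁻¹ := by
          rw [ENNReal.sub_eq_of_eq_add (by norm_num)]
          rw [← two_mul]
          norm_num [ENNReal.mul_inv_cancel]
      _ ≤ 1 - P {ω | |f ω - m| < δ} := tsub_le_tsub_left hP1 1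
      _ = P {ω | |f ω - m| < δ}ᶜ := (prob_compl_eq_one_sub hBmeas).symm
      _ = P {ω | δ ≤ |f ω - m|} := by rw [hcompl]
  -- evariance lower bound
  have hev : ENNReal.ofReal (δ ^ 2) * P {ω | δ ≤ |f ω - m|} ≤ evariance f P := by
    rw [evariance_eq_lintegral_ofReal]
    have hAE : AEMeasurable (fun ω => ENNReal.ofReal ((f ω - m) ^ 2)) P :=
      (ENNReal.measurable_ofReal.comp ((hfmeas.sub measurable_const).pow_const 2)).aemeasurable
    refine le_trans ?_ (mul_meas_ge_le_lintegral₀ hAE (ENNReal.ofReal (δ ^ 2)))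
    apply mul_le_mul_right
    apply measure_mono
    intro ω hω
    simp only [Set.mem_setOf_eq] at hω ⊢
    apply ENNReal.ofReal_le_ofReal
    calc δ ^ 2 ≤ |f ω - m| ^ 2 := pow_le_pow_left₀ hδpos.le hω 2
      _ = (f ω - m) ^ 2 := sq_abs _
  have hev2 : ENNReal.ofReal (δ ^ 2) * 2⁻¹ ≤ evariance f P :=
    le_trans (mul_le_mul_right hPA _) hev
  have hfin : evariance f P ≠ ⊤ := hyL2.evariance_lt_top.ne
  have hto := ENNReal.toReal_mono hfin hev2
  rw [show variance f P = (evariance f P).toReal from rfl]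
  refine le_trans ?_ hto
  rw [ENNReal.toReal_mul, ENNReal.toReal_ofReal (sq_nonneg δ),
    show ((2:ℝ≥0∞))⁻¹.toReal = 1/2 by simp]
  rw [hδdef]
  field_simp
  ring_nf
  norm_num
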